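/- Let a > 0 and let T be a positive integer. Let R₀, R₁ ∈ ℝ^{m×n} (m ≤ n) be matrices with rank(R₀) ≤ 2T and ⟨R₀, R₁⟩ = 0, where ⟨X, Y⟩ = tr(YᵀX) is the Frobenius inner product. Then ‖R₀ + R₁‖_F ≥ P_a(R₀)/(a·√(2T)). -/

import Mathlib

open Matrix Filter

/-- The singular values of a real `m × n` matrix: square roots of the eigenvalues of `X * Xᵀ`. -/
noncomputable def sv {m n : ℕ} (X : Matrix (Fin m) (Fin n) ℝ) : Fin m → ℝ :=
  fun i => Real.sqrt ((Matrix.isHermitian_mul_conjTranspose_self X).eigenvalues i)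

/-- The singular values arranged in descending order: `svSorted X 0 ≥ svSorted X 1 ≥ ⋯`. -/
noncomputable def svSorted {m n : ℕ} (X : Matrix (Fin m) (Fin n) ℝ) : Fin m → ℝ :=
  fun i => sv X (Tuple.sort (sv X) i.rev)

/-- `P_a(X) = Σᵢ a σᵢ(X)/(a σᵢ(X) + 1)`. -/
noncomputable def Pa {m n : ℕ} (a : ℝ) (X : Matrix (Fin m) (Fin n) ℝ) : ℝ :=
  ∑ i, a * sv X i / (a * sv X i + 1)

/-- Frobenius norm. -/
noncomputable def frobNorm {m n : ℕ} (X : Matrix (Fin m) (Fin n) ℝ) : ℝ :=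
  Real.sqrt (∑ i, ∑ j, (X i j) ^ 2)

/-- Nuclear norm: the sum of the singular values. -/
noncomputable def nuclearNorm {m n : ℕ} (X : Matrix (Fin m) (Fin n) ℝ) : ℝ :=
  ∑ i, sv X i

/-- The rectangular `m × n` "diagonal" matrix with diagonal entries `σ`. -/
def diagRect {m n : ℕ} (σ : Fin m → ℝ) : Matrix (Fin m) (Fin n) ℝ :=
  Matrix.of fun i j => if (j : ℕ) = (i : ℕ) then σ i else 0

/-- The `r`-restricted isometry constant `δ_r(𝒜)`. -/
noncomputable def ripConst {m n d : ℕ}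
    (A : Matrix (Fin m) (Fin n) ℝ →ₗ[ℝ] EuclideanSpace ℝ (Fin d)) (r : ℕ) : ℝ :=
  sInf {δ : ℝ | 0 ≤ δ ∧ ∀ X : Matrix (Fin m) (Fin n) ℝ, X.rank ≤ r →
    (1 - δ) * frobNorm X ^ 2 ≤ ‖A X‖ ^ 2 ∧ ‖A X‖ ^ 2 ≤ (1 + δ) * frobNorm X ^ 2}

/-!
Each term `a σ / (a σ + 1)` is at most `a σ`, so `P_a(R₀) ≤ a ‖R₀‖_*`. Cauchy–Schwarz over the
`rank R₀` nonzero singular values, together with `∑ σᵢ² = ‖R₀‖_F²`, gives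
`‖R₀‖_* ≤ √(rank R₀) ‖R₀‖_F`, and orthogonality of `R₀` and `R₁` gives `‖R₀‖_F ≤ ‖R₀ + R₁‖_F`.
-/

lemma sv_nonneg {m n : ℕ} (X : Matrix (Fin m) (Fin n) ℝ) (i : Fin m) : 0 ≤ sv X i :=
  Real.sqrt_nonneg _

lemma sum_sv_sq {m n : ℕ} (X : Matrix (Fin m) (Fin n) ℝ) :
    ∑ i, sv X i ^ 2 = ∑ i, ∑ j, X i j ^ 2 := by
  have hX := isHermitian_mul_conjTranspose_self X
  have hsq (i : Fin m) : sv X i ^ 2 = hX.eigenvalues i :=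
    Real.sq_sqrt ((posSemidef_self_mul_conjTranspose X).eigenvalues_nonneg i)
  have htrace : ∑ i, hX.eigenvalues i = trace (X * Xᴴ) := by
    simpa using hX.trace_eq_sum_eigenvalues.symm
  simp only [hsq, htrace]
  simp [trace, mul_apply, sq]

lemma frobNorm_eq_sqrt_sum_sv_sq {m n : ℕ} (X : Matrix (Fin m) (Fin n) ℝ) :
    frobNorm X = Real.sqrt (∑ i, sv X i ^ 2) := by
  rw [frobNorm, sum_sv_sq]

lemma card_sv_ne_zero {m n : ℕ} (X : Matrix (Fin m) (Fin n) ℝ) :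
    (Finset.univ.filter fun i => sv X i ≠ 0).card = X.rank := by
  have hX := isHermitian_mul_conjTranspose_self X
  have hrank : (X * Xᴴ).rank = X.rank := by
    rw [conjTranspose_eq_transpose_of_trivial, rank_self_mul_transpose]
  rw [← hrank, hX.rank_eq_card_non_zero_eigs, Fintype.card_subtype]
  congr 1
  ext i
  have hnn : 0 ≤ hX.eigenvalues i := (posSemidef_self_mul_conjTranspose X).eigenvalues_nonneg i
  simpa [sv] using (Real.sqrt_eq_zero hnn).not

lemma nuclearNorm_le_sqrt_rank_mul_frobNorm {m n : ℕ} (X : Matrix (Fin m) (Fin n) ℝ) :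
    nuclearNorm X ≤ Real.sqrt X.rank * frobNorm X := by
  set S := Finset.univ.filter fun i => sv X i ≠ 0
  have hsupp : nuclearNorm X = ∑ i ∈ S, sv X i := by
    rw [nuclearNorm, Finset.sum_filter_ne_zero]
  have hCS : (∑ i ∈ S, sv X i) ^ 2 ≤ X.rank * ∑ i, sv X i ^ 2 := calc
    (∑ i ∈ S, sv X i) ^ 2 ≤ S.card * ∑ i ∈ S, sv X i ^ 2 := sq_sum_le_card_mul_sum_sq
    _ ≤ X.rank * ∑ i, sv X i ^ 2 := by
      rw [card_sv_ne_zero]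
      gcongr
      exact Finset.subset_univ S
  rw [hsupp, frobNorm_eq_sqrt_sum_sv_sq, ← Real.sqrt_mul (Nat.cast_nonneg _)]
  exact Real.le_sqrt_of_sq_le hCS

lemma Pa_le_mul_nuclearNorm {m n : ℕ} {a : ℝ} (ha : 0 ≤ a) (X : Matrix (Fin m) (Fin n) ℝ) :
    Pa a X ≤ a * nuclearNorm X := by
  rw [Pa, nuclearNorm, Finset.mul_sum]
  refine Finset.sum_le_sum fun i _ => ?_
  have hσ : 0 ≤ a * sv X i := mul_nonneg ha (sv_nonneg X i)
  exact div_le_self hσ (le_add_of_nonneg_left hσ)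

lemma sum_sq_add_eq {m n : ℕ} (X Y : Matrix (Fin m) (Fin n) ℝ) :
    ∑ i, ∑ j, (X + Y) i j ^ 2 =
      ∑ i, ∑ j, X i j ^ 2 + ∑ i, ∑ j, Y i j ^ 2 + 2 * trace (Yᵀ * X) := by
  have htrace : trace (Yᵀ * X) = ∑ i, ∑ j, Y i j * X i j := by
    simp only [trace, diag, mul_apply, transpose_apply]
    exact Finset.sum_comm
  simp only [htrace, Matrix.add_apply, Finset.mul_sum, ← Finset.sum_add_distrib]
  refine Finset.sum_congr rfl fun i _ => Finset.sum_congr rfl fun j _ => by ring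

lemma frobNorm_le_frobNorm_add_of_trace_eq_zero {m n : ℕ} {X Y : Matrix (Fin m) (Fin n) ℝ}
    (h : trace (Yᵀ * X) = 0) : frobNorm X ≤ frobNorm (X + Y) := by
  refine Real.sqrt_le_sqrt ?_
  rw [sum_sq_add_eq, h, mul_zero, add_zero, le_add_iff_nonneg_right]
  positivity

theorem statement6_general (m n : ℕ) (a : ℝ) (ha : 0 < a)
    (T : ℕ)
    (R₀ R₁ : Matrix (Fin m) (Fin n) ℝ)
    (hrank : R₀.rank ≤ 2 * T)
    (horth : Matrix.trace (R₁ᵀ * R₀) = 0) :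
    frobNorm (R₀ + R₁) ≥ Pa a R₀ / (a * Real.sqrt (2 * T)) := by
  have hrank' : Real.sqrt R₀.rank ≤ Real.sqrt (2 * T) :=
    Real.sqrt_le_sqrt (by exact_mod_cast hrank)
  refine div_le_of_le_mul₀ (by positivity) (Real.sqrt_nonneg _) ?_
  calc Pa a R₀ ≤ a * nuclearNorm R₀ := Pa_le_mul_nuclearNorm ha.le R₀
    _ ≤ a * (Real.sqrt R₀.rank * frobNorm R₀) :=
      mul_le_mul_of_nonneg_left (nuclearNorm_le_sqrt_rank_mul_frobNorm R₀) ha.le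
    _ ≤ a * (Real.sqrt (2 * T) * frobNorm (R₀ + R₁)) := by
      gcongr
      · exact Real.sqrt_nonneg _
      · exact frobNorm_le_frobNorm_add_of_trace_eq_zero horth
    _ = frobNorm (R₀ + R₁) * (a * Real.sqrt (2 * T)) := by ring

theorem statement6 (m n : ℕ) (hmn : m ≤ n) (a : ℝ) (ha : 0 < a)
    (T : ℕ) (hT : 0 < T)
    (R₀ R₁ : Matrix (Fin m) (Fin n) ℝ)
    (hrank : R₀.rank ≤ 2 * T)
    (horth : Matrix.trace (R₁ᵀ * R₀) = 0) :
    frobNorm (R₀ + R₁) ≥ Pa a R₀ / (a * Real.sqrt (2 * T)) :=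
  statement6_general m n a ha T R₀ R₁ hrank horth
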